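/- arXiv:1604.06975 — 5 statements merged into one kernel-verified Lean document; each statement's English description precedes it below -/
import Mathlib

section
/- Every sequence (γ_n) of loops that is Cauchy for d_Γ converges in d_Γ to some loop γ; equivalently, the quotient metric space Γ₀ of loops modulo the relation d_Γ = 0 is a complete metric space. -/
/-
`d_Γ` is a pseudometric on loops, and it suffices to show that a sequence with
`d_Γ(γ_k, γ_{k+1}) < 2^{-k}` converges. Choosing reparametrizations that nearly realize these
distances and composing them, one gets parametrizations of the `γ_k` that form a uniformly Cauchy
sequence of maps `ℝ → ℂ`; their uniform limit is a continuous `1`-periodic map, i.e. a loop, and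
each `γ_k` is within `2^{1-k}` of it.
-/

noncomputable section

open Set Filter Metric MeasureTheory
open scoped Classical

/-- A loop: a continuous `1`-periodic map `ℝ → ℂ`, viewed as a continuous map from the
circle `S¹ = ℝ/ℤ` to the complex plane. -/
structure Loop where
  toFun : ℝ → ℂ
  continuous_toFun : Continuous toFun
  periodic_toFun : Function.Periodic toFun 1

/-- Lifts of orientation-preserving homeomorphisms of the circle `ℝ/ℤ`: continuous strictly
increasing maps of `ℝ` commuting with translation by `1`. -/
def CircleMaps : Set (ℝ → ℝ) :=
  {φ | Continuous φ ∧ StrictMono φ ∧ ∀ t, φ (t + 1) = φ t + 1}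

/-- The supremum distance between loops, up to orientation-preserving reparametrization:
`d_Γ(γ, γ') = inf_{φ,ψ} sup_t |γ(φ t) - γ'(ψ t)|`. -/
def dGamma (γ γ' : Loop) : ℝ :=
  sInf {r : ℝ | 0 ≤ r ∧ ∃ φ ∈ CircleMaps, ∃ ψ ∈ CircleMaps,
    ∀ t : ℝ, dist (γ.toFun (φ t)) (γ'.toFun (ψ t)) ≤ r}

/-- Loops at `d_Γ`-distance zero are identified. -/
def loopRel (γ γ' : Loop) : Prop := dGamma γ γ' = 0

/-- The space `Γ₀` of loop classes: loops modulo the relation `d_Γ = 0`. -/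
def LoopClass : Type := Quot loopRel

/-- The class of a loop in `Γ₀`. -/
def Loop.cls (γ : Loop) : LoopClass := Quot.mk loopRel γ

namespace LoopClass

/-- The image of a loop class (all representatives have the same image). -/
def image (c : LoopClass) : Set ℂ := ⋃ γ ∈ {γ : Loop | γ.cls = c}, Set.range γ.toFun

/-- The diameter of a loop class. -/
def diam (c : LoopClass) : ℝ := Metric.diam c.image

/-- A loop class is trivial if its image is a single point. -/
def IsTrivial (c : LoopClass) : Prop := ∃ z : ℂ, c.image = {z}

/-- A loop class is simple if it has an injective representative. -/
def IsSimple (c : LoopClass) : Prop :=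
  ∃ γ : Loop, γ.cls = c ∧ ∀ s t : ℝ, s ∈ Set.Ico (0:ℝ) 1 → t ∈ Set.Ico (0:ℝ) 1 →
    γ.toFun s = γ.toFun t → s = t

/-- The induced distance `d_Γ` on loop classes. -/
def dist (c c' : LoopClass) : ℝ :=
  sInf {r : ℝ | ∃ γ γ' : Loop, γ.cls = c ∧ γ'.cls = c' ∧ dGamma γ γ' ≤ r}

end LoopClass

/-- The space `X(K)` of at most countable, locally finite collections of nontrivial loop
classes with images contained in `K`. -/
def LoopCollections (K : Set ℂ) : Set (Set LoopClass) :=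
  {F | F.Countable ∧ (∀ c ∈ F, ¬ c.IsTrivial ∧ c.image ⊆ K) ∧
    ∀ ε : ℝ, 0 < ε → {c ∈ F | ε < c.diam}.Finite}

/-- A partial matching between the collections `F` and `G`: a set of pairs in which every
element of `F` and every element of `G` occurs at most once. -/
def IsMatching (F G : Set LoopClass) (π : Set (LoopClass × LoopClass)) : Prop :=
  (∀ p ∈ π, p.1 ∈ F ∧ p.2 ∈ G) ∧
  (∀ p ∈ π, ∀ q ∈ π, p.1 = q.1 → p = q) ∧
  (∀ p ∈ π, ∀ q ∈ π, p.2 = q.2 → p = q)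

/-- The elements of `F` and `G` not matched by `π`. -/
def unmatched (F G : Set LoopClass) (π : Set (LoopClass × LoopClass)) : Set LoopClass :=
  {c ∈ F | ∀ p ∈ π, p.1 ≠ c} ∪ {c ∈ G | ∀ p ∈ π, p.2 ≠ c}

/-- The distance `d_X` between loop collections: the infimum over partial matchings of the
maximum of the matched `d_Γ`-distances and of half the diameters of unmatched loops. -/
def dX (F G : Set LoopClass) : ℝ :=
  sInf {r : ℝ | 0 ≤ r ∧ ∃ π : Set (LoopClass × LoopClass), IsMatching F G π ∧
    (∀ p ∈ π, LoopClass.dist p.1 p.2 ≤ r) ∧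
    ∀ c ∈ unmatched F G π, c.diam / 2 ≤ r}

namespace CircleMaps

theorem id_mem : (id : ℝ → ℝ) ∈ CircleMaps :=
  ⟨continuous_id, strictMono_id, fun _ => rfl⟩

theorem comp_mem {φ ψ : ℝ → ℝ} (hφ : φ ∈ CircleMaps) (hψ : ψ ∈ CircleMaps) :
    φ ∘ ψ ∈ CircleMaps :=
  ⟨hφ.1.comp hψ.1, hφ.2.1.comp hψ.2.1, fun t => by simp only [Function.comp, hψ.2.2, hφ.2.2]⟩

/- A continuous `CircleDeg1Lift` is surjective, hence a unit of that monoid; the inverse is an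
order isomorphism of `ℝ`, so it is continuous. -/
theorem exists_rightInverse_mem {φ : ℝ → ℝ} (hφ : φ ∈ CircleMaps) :
    ∃ ψ ∈ CircleMaps, Function.RightInverse ψ φ := by
  obtain ⟨hcont, hmono, hperiod⟩ := hφ
  let f : CircleDeg1Lift := ⟨⟨φ, hmono.monotone⟩, hperiod⟩
  have hsurj : Function.Surjective f := f.continuous_iff_surjective.1 hcont
  obtain ⟨u, hu⟩ := CircleDeg1Lift.isUnit_iff_bijective.2 ⟨hmono.injective, hsurj⟩
  let e := CircleDeg1Lift.toOrderIso u
  have he : ⇑e.symm ∈ CircleMaps :=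
    ⟨e.symm.continuous, e.symm.strictMono, (↑u⁻¹ : CircleDeg1Lift).map_add_one⟩
  refine ⟨e.symm, he, fun t => ?_⟩
  change f (e.symm t) = t
  rw [← hu]
  exact e.apply_symm_apply t

end CircleMaps

theorem dGamma_le_of_forall_dist_le {γ γ' : Loop} {r : ℝ} (hr : 0 ≤ r) {φ ψ : ℝ → ℝ}
    (hφ : φ ∈ CircleMaps) (hψ : ψ ∈ CircleMaps)
    (h : ∀ t, dist (γ.toFun (φ t)) (γ'.toFun (ψ t)) ≤ r) :
    dGamma γ γ' ≤ r :=
  csInf_le ⟨0, fun _ hs => hs.1⟩ ⟨hr, φ, hφ, ψ, hψ, h⟩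

theorem dGamma_bounds_nonempty (γ γ' : Loop) :
    {r : ℝ | 0 ≤ r ∧ ∃ φ ∈ CircleMaps, ∃ ψ ∈ CircleMaps,
      ∀ t, dist (γ.toFun (φ t)) (γ'.toFun (ψ t)) ≤ r}.Nonempty := by
  have hper : Function.Periodic (fun t => dist (γ.toFun t) (γ'.toFun t)) 1 := fun t => by
    simp only [γ.periodic_toFun t, γ'.periodic_toFun t]
  obtain ⟨C, hC⟩ := (hper.isBounded_of_continuous one_ne_zero
    (γ.continuous_toFun.dist γ'.continuous_toFun)).bddAbove
  exact ⟨C, dist_nonneg.trans (hC ⟨0, rfl⟩), id, CircleMaps.id_mem, id, CircleMaps.id_mem,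
    fun t => hC ⟨t, rfl⟩⟩

theorem exists_dist_lt_of_dGamma_lt {γ γ' : Loop} {r : ℝ} (h : dGamma γ γ' < r) :
    ∃ α ∈ CircleMaps, ∀ t, dist (γ.toFun t) (γ'.toFun (α t)) < r := by
  obtain ⟨s, ⟨-, φ, hφ, ψ, hψ, hs⟩, hsr⟩ :=
    exists_lt_of_csInf_lt (dGamma_bounds_nonempty γ γ') h
  obtain ⟨φ', hφ', hφφ'⟩ := CircleMaps.exists_rightInverse_mem hφ
  refine ⟨ψ ∘ φ', CircleMaps.comp_mem hψ hφ', fun t => ?_⟩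
  have := hs (φ' t)
  rw [hφφ' t] at this
  exact this.trans_lt hsr

theorem dGamma_nonneg (γ γ' : Loop) : 0 ≤ dGamma γ γ' :=
  le_csInf (dGamma_bounds_nonempty γ γ') fun _ hs => hs.1

theorem dGamma_self (γ : Loop) : dGamma γ γ = 0 :=
  (dGamma_le_of_forall_dist_le le_rfl CircleMaps.id_mem CircleMaps.id_mem fun _ =>
    (dist_self _).le).antisymm (dGamma_nonneg γ γ)

theorem dGamma_comm (γ γ' : Loop) : dGamma γ γ' = dGamma γ' γ := by
  unfold dGamma
  congr 1
  ext r
  constructor <;>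
  · rintro ⟨hr, φ, hφ, ψ, hψ, h⟩
    exact ⟨hr, ψ, hψ, φ, hφ, fun t => by rw [dist_comm]; exact h t⟩

theorem dGamma_triangle (γ₁ γ₂ γ₃ : Loop) : dGamma γ₁ γ₃ ≤ dGamma γ₁ γ₂ + dGamma γ₂ γ₃ := by
  refine le_add_of_forall_lt fun r hr r' hr' => ?_
  obtain ⟨α, hα, h⟩ := exists_dist_lt_of_dGamma_lt hr
  obtain ⟨α', hα', h'⟩ := exists_dist_lt_of_dGamma_lt hr'
  have hr₀ : 0 ≤ r + r' :=
    add_nonneg (dist_nonneg.trans (h 0).le) (dist_nonneg.trans (h' 0).le)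
  exact dGamma_le_of_forall_dist_le hr₀ CircleMaps.id_mem (CircleMaps.comp_mem hα' hα)
    fun t => (dist_triangle _ _ _).trans (add_le_add (h t).le (h' (α t)).le)

instance : PseudoMetricSpace Loop where
  dist := dGamma
  dist_self := dGamma_self
  dist_comm := dGamma_comm
  dist_triangle := dGamma_triangle

theorem exists_tendsto_dist_le_of_le_geometric {X E : Type*} [PseudoMetricSpace E]
    [CompleteSpace E] {f : ℕ → X → E} {C r : ℝ} (hr : r < 1)
    (hf : ∀ k x, dist (f k x) (f (k + 1) x) ≤ C * r ^ k) :
    ∃ g : X → E, (∀ x, Tendsto (fun k => f k x) atTop (nhds (g x))) ∧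
      ∀ k x, dist (f k x) (g x) ≤ C * r ^ k / (1 - r) := by
  choose g hg using fun x => cauchySeq_tendsto_of_complete
    (cauchySeq_of_le_geometric r C hr (hf · x))
  exact ⟨g, hg, fun k x => dist_le_of_le_geometric_of_tendsto r C hr (hf · x) (hg x) k⟩

theorem tendsto_mul_pow_div_one_sub_nhds_zero (C : ℝ) {r : ℝ} (hr₀ : 0 ≤ r) (hr : r < 1) :
    Tendsto (fun k : ℕ => C * r ^ k / (1 - r)) atTop (nhds 0) := by
  simpa using ((tendsto_pow_atTop_nhds_zero_of_lt_one hr₀ hr).const_mul C).div_const (1 - r)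

theorem Loop.exists_dGamma_le_of_dist_le_geometric {u : ℕ → Loop} {α : ℕ → ℝ → ℝ}
    (hα : ∀ k, α k ∈ CircleMaps) {C r : ℝ} (hr₀ : 0 ≤ r) (hr : r < 1)
    (h : ∀ k t, dist ((u k).toFun (α k t)) ((u (k + 1)).toFun (α (k + 1) t)) ≤ C * r ^ k) :
    ∃ γ : Loop, ∀ k, dGamma (u k) γ ≤ C * r ^ k / (1 - r) := by
  set δ : ℕ → ℝ → ℂ := fun k t => (u k).toFun (α k t)
  obtain ⟨g, hg, hdist⟩ := exists_tendsto_dist_le_of_le_geometric hr h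
  have hunif : TendstoUniformly δ g atTop := by
    refine Metric.tendstoUniformly_iff.2 fun ε hε => ?_
    filter_upwards [(tendsto_mul_pow_div_one_sub_nhds_zero C hr₀ hr).eventually
      (gt_mem_nhds hε)] with k hk t
    exact (dist_comm (g t) _).trans_le (hdist k t) |>.trans_lt hk
  have hcont : Continuous g := hunif.continuous
    (Eventually.of_forall fun k => (u k).continuous_toFun.comp (hα k).1).frequently
  have hper : Function.Periodic g 1 := fun t => by
    have hδ : (fun k => δ k (t + 1)) = fun k => δ k t := funext fun k => by
      simp only [δ, (hα k).2.2, (u k).periodic_toFun (α k t)]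
    exact tendsto_nhds_unique (hδ ▸ hg (t + 1)) (hg t)
  exact ⟨⟨g, hcont, hper⟩, fun k => dGamma_le_of_forall_dist_le
    (dist_nonneg.trans (hdist k 0)) (hα k) CircleMaps.id_mem (hdist k)⟩

instance : CompleteSpace Loop := by
  refine Metric.complete_of_convergent_controlled_sequences (fun N => (1 / 2 : ℝ) ^ N)
    (fun N => by positivity) fun u hu => ?_
  choose β hβ hβu using fun k =>
    exists_dist_lt_of_dGamma_lt (hu k k (k + 1) le_rfl k.le_succ)
  let α : ℕ → ℝ → ℝ := fun k => Nat.rec id (fun j a => β j ∘ a) k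
  have hα : ∀ k, α k ∈ CircleMaps := fun k =>
    Nat.rec CircleMaps.id_mem (fun j hj => CircleMaps.comp_mem (hβ j) hj) k
  obtain ⟨γ, hγ⟩ := Loop.exists_dGamma_le_of_dist_le_geometric hα (C := 1) (by norm_num)
    (by norm_num : (1 / 2 : ℝ) < 1) fun k t => by rw [one_mul]; exact (hβu k (α k t)).le
  exact ⟨γ, tendsto_iff_dist_tendsto_zero.2 (squeeze_zero (fun _ => dist_nonneg) hγ
    (tendsto_mul_pow_div_one_sub_nhds_zero 1 (by norm_num) (by norm_num)))⟩

/-- Every `d_Γ`-Cauchy sequence of loops converges in `d_Γ` to some loop;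
i.e. the quotient space `Γ₀` is complete. -/
theorem loops_complete (γ : ℕ → Loop)
    (hcauchy : ∀ ε : ℝ, 0 < ε → ∃ N : ℕ, ∀ m ≥ N, ∀ n ≥ N, dGamma (γ m) (γ n) < ε) :
    ∃ γlim : Loop, Tendsto (fun n => dGamma (γ n) γlim) atTop (nhds 0) := by
  have hγ : CauchySeq γ := Metric.cauchySeq_iff.2 hcauchy
  obtain ⟨γlim, hlim⟩ := cauchySeq_tendsto_of_complete hγ
  exact ⟨γlim, tendsto_iff_dist_tendsto_zero.1 hlim⟩
end
end

section
/- For every compact set K ⊂ ℂ, the set {F ∈ X(K) : the images of the elements of F are pairwise disjoint} is a Borel subset of the metric space (X(K), d_X). -/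
noncomputable section

open Set Filter Metric MeasureTheory
open scoped Classical

/-- The space `X(K)`, as a type. -/
def XSpace (K : Set ℂ) : Type := {F : Set LoopClass // F ∈ LoopCollections K}

namespace XSpace

/-- The metric `d_X` on `X(K)`. -/
def dist {K : Set ℂ} (F G : XSpace K) : ℝ := dX F.1 G.1

/-- `d_X`-open subsets of `X(K)`. -/
def IsOpen {K : Set ℂ} (U : Set (XSpace K)) : Prop :=
  ∀ F ∈ U, ∃ ε : ℝ, 0 < ε ∧ ∀ G : XSpace K, XSpace.dist F G < ε → G ∈ U

/-- The Borel σ-algebra of the metric space `(X(K), d_X)`. -/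
instance measurableSpace {K : Set ℂ} : MeasurableSpace (XSpace K) :=
  MeasurableSpace.generateFrom {U | XSpace.IsOpen U}

/-- Bounded `d_X`-continuous real test functions on `X(K)`. -/
def IsBddContinuous {K : Set ℂ} (f : XSpace K → ℝ) : Prop :=
  (∃ M : ℝ, ∀ F, |f F| ≤ M) ∧
  ∀ F : XSpace K, ∀ ε : ℝ, 0 < ε → ∃ ρ : ℝ, 0 < ρ ∧
    ∀ G : XSpace K, XSpace.dist F G < ρ → |f G - f F| < ε

end XSpace

/-- Weak convergence, as `δ → 0⁺`, of a `δ`-indexed family of Borel measures on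
`(X(K), d_X)`: integrals of bounded `d_X`-continuous functions converge. -/
def WeakLimit {K : Set ℂ} (L : ℝ → Measure (XSpace K)) (μ : Measure (XSpace K)) : Prop :=
  ∀ f : XSpace K → ℝ, XSpace.IsBddContinuous f →
    Tendsto (fun δ : ℝ => ∫ F, f F ∂(L δ)) (nhdsWithin 0 (Set.Ioi 0))
      (nhds (∫ F, f F ∂μ))

/-- The Dirac mass at a loop collection (zero if the collection is not an element
of `X(K)`). -/
def diracAt (K : Set ℂ) (S : Set LoopClass) : Measure (XSpace K) :=
  if h : S ∈ LoopCollections K then Measure.dirac (⟨S, h⟩ : XSpace K) else 0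

/-!
If two loops of `F` meet, both have positive diameter, so for some `m` and every `n` the
collection `F` has two distinct loops of diameter `> 1/(m+1)` whose images come within `1/(n+1)`
of each other. For fixed `q > 0` and `r`, having such a pair is a `d_X`-open condition: a
collection `d_X`-close to `F` must match both loops, whose diameters exceed twice the distance,
to loops with nearly the same images. Conversely, only finitely many loops of `F` have diameter
`> q`, so if such pairs exist for every `n`, a single pair works for infinitely many `n`, and its
compact images meet. The collections with disjoint loops thus form the complement of a countable
union of countable intersections of open sets.
-/

theorem Metric.diam_le_diam_add_two_mul_hausdorffDist {α : Type*} [PseudoMetricSpace α]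
    {s t : Set α} (hfin : hausdorffEDist s t ≠ ⊤) (ht : Bornology.IsBounded t) :
    diam s ≤ diam t + 2 * hausdorffDist s t := by
  refine diam_le_of_forall_dist_le
    (add_nonneg diam_nonneg (mul_nonneg zero_le_two hausdorffDist_nonneg)) fun x hx y hy =>
    le_of_forall_pos_lt_add fun δ hδ => ?_
  have hH : hausdorffDist s t < hausdorffDist s t + δ / 2 := by linarith
  obtain ⟨x', hx', hxx'⟩ := exists_dist_lt_of_hausdorffDist_lt hx hH hfin
  obtain ⟨y', hy', hyy'⟩ := exists_dist_lt_of_hausdorffDist_lt hy hH hfin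
  have hx'y' := dist_le_diam_of_mem ht hx' hy'
  calc dist x y ≤ dist x x' + dist y y' + dist x' y' := dist_triangle4_right x y x' y'
    _ < diam t + 2 * hausdorffDist s t + δ := by linarith

theorem IsCompact.not_disjoint_of_forall_exists_dist_lt {α : Type*} [PseudoMetricSpace α]
    {s t : Set α} (hs : IsCompact s) (ht : IsClosed t)
    (h : ∀ ε > 0, ∃ x ∈ s, ∃ y ∈ t, dist x y < ε) : ¬ Disjoint s t := by
  intro hst
  obtain ⟨r, hr, hsep⟩ := exists_pos_forall_lt_edist hs ht hst
  obtain ⟨x, hx, y, hy, hxy⟩ := h r hr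
  exact (hsep x hx y hy).not_gt (edist_lt_coe.2 hxy)

theorem surjective_of_mem_circleMaps {φ : ℝ → ℝ} (hφ : φ ∈ CircleMaps) :
    Function.Surjective φ :=
  (CircleDeg1Lift.continuous_iff_surjective ⟨⟨φ, hφ.2.1.monotone⟩, hφ.2.2⟩).1 hφ.1

namespace Loop

theorem isCompact_range (γ : Loop) : IsCompact (range γ.toFun) :=
  γ.periodic_toFun.compact_of_continuous one_ne_zero γ.continuous_toFun

theorem hausdorffDist_range_le_dGamma (γ γ' : Loop) :
    hausdorffDist (range γ.toFun) (range γ'.toFun) ≤ dGamma γ γ' := by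
  have hid : id ∈ CircleMaps := ⟨continuous_id, strictMono_id, fun _ => rfl⟩
  have hb := (γ.isCompact_range.union γ'.isCompact_range).isBounded
  refine le_csInf ⟨_, diam_nonneg, id, hid, id, hid, fun t =>
    dist_le_diam_of_mem hb (Or.inl (mem_range_self _)) (Or.inr (mem_range_self _))⟩ ?_
  rintro r ⟨hr, φ, hφ, ψ, hψ, h⟩
  refine hausdorffDist_le_of_mem_dist hr ?_ ?_
  · rintro _ ⟨s, rfl⟩
    obtain ⟨t, rfl⟩ := surjective_of_mem_circleMaps hφ s
    exact ⟨_, mem_range_self _, h t⟩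
  · rintro _ ⟨s, rfl⟩
    obtain ⟨t, rfl⟩ := surjective_of_mem_circleMaps hψ s
    exact ⟨_, mem_range_self _, dist_comm (γ.toFun (φ t)) _ ▸ h t⟩

theorem range_eq_of_loopRel {γ γ' : Loop} (h : loopRel γ γ') :
    range γ.toFun = range γ'.toFun := by
  have hfin := hausdorffEDist_ne_top_of_nonempty_of_bounded (range_nonempty γ.toFun)
    (range_nonempty γ'.toFun) γ.isCompact_range.isBounded γ'.isCompact_range.isBounded
  refine (γ.isCompact_range.isClosed.hausdorffDist_zero_iff_eq γ'.isCompact_range.isClosed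
    hfin).1 (le_antisymm ?_ hausdorffDist_nonneg)
  exact (hausdorffDist_range_le_dGamma γ γ').trans_eq h

theorem range_eq_of_cls_eq {γ γ' : Loop} (h : γ.cls = γ'.cls) :
    range γ.toFun = range γ'.toFun :=
  congrArg (Quot.lift (fun γ : Loop => range γ.toFun) fun _ _ => range_eq_of_loopRel) h

end Loop

namespace LoopClass

theorem image_eq_range {c : LoopClass} {γ : Loop} (h : γ.cls = c) :
    c.image = range γ.toFun :=
  subset_antisymm (iUnion₂_subset fun _ hγ' => (Loop.range_eq_of_cls_eq (hγ'.trans h.symm)).le)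
    fun _ hz => mem_iUnion₂.2 ⟨γ, h, hz⟩

theorem isCompact_image (c : LoopClass) : IsCompact c.image := by
  induction c using Quot.ind with
  | mk γ => exact image_eq_range (γ := γ) rfl ▸ γ.isCompact_range

theorem image_nonempty (c : LoopClass) : c.image.Nonempty := by
  induction c using Quot.ind with
  | mk γ => exact image_eq_range (γ := γ) rfl ▸ range_nonempty γ.toFun

theorem hausdorffEDist_image_ne_top (c d : LoopClass) : hausdorffEDist c.image d.image ≠ ⊤ :=
  hausdorffEDist_ne_top_of_nonempty_of_bounded c.image_nonempty d.image_nonempty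
    c.isCompact_image.isBounded d.isCompact_image.isBounded

theorem hausdorffDist_image_le_dist (c d : LoopClass) :
    hausdorffDist c.image d.image ≤ c.dist d := by
  obtain ⟨γ₀, rfl⟩ := Quot.exists_rep c
  obtain ⟨δ₀, rfl⟩ := Quot.exists_rep d
  refine le_csInf ⟨_, γ₀, δ₀, rfl, rfl, le_rfl⟩ ?_
  rintro r ⟨γ, δ, hγ, hδ, h⟩
  rw [image_eq_range hγ, image_eq_range hδ]
  exact (γ.hausdorffDist_range_le_dGamma δ).trans h

theorem diam_le_diam_add_two_mul_hausdorffDist (c d : LoopClass) :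
    c.diam ≤ d.diam + 2 * hausdorffDist c.image d.image :=
  Metric.diam_le_diam_add_two_mul_hausdorffDist (c.hausdorffEDist_image_ne_top d)
    d.isCompact_image.isBounded

theorem diam_pos {c : LoopClass} (hc : ¬ c.IsTrivial) : 0 < c.diam := by
  obtain ⟨z, hz⟩ | hnt := c.image_nonempty.exists_eq_singleton_or_nontrivial
  · exact absurd ⟨z, hz⟩ hc
  · exact Metric.diam_pos hnt c.isCompact_image.isBounded

end LoopClass

section Collections

variable {K : Set ℂ}

theorem XSpace.exists_matching_of_dist_lt (hK : IsCompact K) {F G : XSpace K} {ε : ℝ}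
    (h : F.dist G < ε) :
    ∃ π, IsMatching F.1 G.1 π ∧ (∀ p ∈ π, p.1.dist p.2 < ε) ∧
      ∀ c ∈ unmatched F.1 G.1 π, c.diam / 2 < ε := by
  have hdiam : ∀ H : XSpace K, ∀ c ∈ H.1, c.diam ≤ diam K :=
    fun H c hc => diam_mono (H.2.2.1 c hc).2 hK.isBounded
  have hne : ∃ r, 0 ≤ r ∧ ∃ π, IsMatching F.1 G.1 π ∧
      (∀ p ∈ π, p.1.dist p.2 ≤ r) ∧ ∀ c ∈ unmatched F.1 G.1 π, c.diam / 2 ≤ r := by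
    refine ⟨diam K / 2, by positivity, ∅, by simp [IsMatching], by simp, ?_⟩
    rintro c (⟨hc, -⟩ | ⟨hc, -⟩)
    · linarith [hdiam F c hc]
    · linarith [hdiam G c hc]
  obtain ⟨r, ⟨-, π, hπ, hmatched, hunmatched⟩, hr⟩ :=
    (csInf_lt_iff ⟨0, fun r hr => hr.1⟩ hne).1 h
  exact ⟨π, hπ, fun p hp => (hmatched p hp).trans_lt hr,
    fun c hc => (hunmatched c hc).trans_lt hr⟩

def nearlyMeeting (K : Set ℂ) (q r : ℝ) : Set (XSpace K) :=
  {F | ∃ c ∈ F.1, ∃ c' ∈ F.1, c ≠ c' ∧ q < c.diam ∧ q < c'.diam ∧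
    ∃ z ∈ c.image, ∃ z' ∈ c'.image, dist z z' < r}

theorem isOpen_nearlyMeeting (hK : IsCompact K) {q : ℝ} (hq : 0 < q) (r : ℝ) :
    XSpace.IsOpen (nearlyMeeting K q r) := by
  rintro F ⟨c, hc, c', hc', hne, hqc, hqc', z, hz, z', hz', hzz'⟩
  set ε := min (min ((c.diam - q) / 2) ((c'.diam - q) / 2)) ((r - dist z z') / 2)
  have hε₁ : ε ≤ (c.diam - q) / 2 := (min_le_left _ _).trans (min_le_left _ _)
  have hε₂ : ε ≤ (c'.diam - q) / 2 := (min_le_left _ _).trans (min_le_right _ _)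
  have hε₃ : ε ≤ (r - dist z z') / 2 := min_le_right _ _
  refine ⟨ε, lt_min (lt_min (by linarith) (by linarith)) (by linarith), fun G hG => ?_⟩
  obtain ⟨π, hπ, hclose, hunmatched⟩ := XSpace.exists_matching_of_dist_lt hK hG
  have partner : ∀ b ∈ F.1, 2 * ε ≤ b.diam - q → ∃ d ∈ G.1, (b, d) ∈ π ∧ q < d.diam ∧
      ∀ y ∈ b.image, ∃ w ∈ d.image, dist y w < ε := by
    intro b hb hbε
    obtain ⟨⟨b, d⟩, hbd, rfl⟩ : ∃ p ∈ π, p.1 = b := by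
      by_contra! hfree
      linarith [hunmatched b (Or.inl ⟨hb, hfree⟩)]
    have hH : hausdorffDist b.image d.image < ε :=
      (b.hausdorffDist_image_le_dist d).trans_lt (hclose _ hbd)
    refine ⟨d, (hπ.1 _ hbd).2, hbd, ?_, fun y hy =>
      exists_dist_lt_of_hausdorffDist_lt hy hH (b.hausdorffEDist_image_ne_top d)⟩
    linarith [b.diam_le_diam_add_two_mul_hausdorffDist d]
  obtain ⟨d, hd, hcd, hqd, hw⟩ := partner c hc (by linarith)
  obtain ⟨d', hd', hcd', hqd', hw'⟩ := partner c' hc' (by linarith)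
  obtain ⟨w, hw, hzw⟩ := hw z hz
  obtain ⟨w', hw', hzw'⟩ := hw' z' hz'
  have hdd' : d ≠ d' := fun h => hne (congrArg Prod.fst (hπ.2.2 _ hcd _ hcd' h))
  refine ⟨d, hd, d', hd', hdd', hqd, hqd', w, hw, w', hw', ?_⟩
  calc dist w w' ≤ dist w z + dist z z' + dist z' w' := dist_triangle4 w z z' w'
    _ < r := by rw [dist_comm w z]; linarith

theorem not_disjoint_of_forall_mem_nearlyMeeting {F : XSpace K} {q : ℝ} (hq : 0 < q)
    (h : ∀ n : ℕ, F ∈ nearlyMeeting K q (1 / (n + 1))) :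
    ∃ c ∈ F.1, ∃ c' ∈ F.1, c ≠ c' ∧ ¬ Disjoint c.image c'.image := by
  set B := {c ∈ F.1 | q < c.diam}
  have hB : B.Finite := F.2.2.2 q hq
  have hfreq : ∃ᶠ n : ℕ in atTop, ∃ c ∈ B, ∃ c' ∈ B, c ≠ c' ∧
      ∃ z ∈ c.image, ∃ z' ∈ c'.image, dist z z' < 1 / ((n : ℝ) + 1) :=
    Frequently.of_forall fun n => by
      obtain ⟨c, hc, c', hc', hne, hqc, hqc', hclose⟩ := h n
      exact ⟨c, ⟨hc, hqc⟩, c', ⟨hc', hqc'⟩, hne, hclose⟩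
  obtain ⟨c, hc, hfreq⟩ := hB.frequently_exists.1 hfreq
  obtain ⟨c', hc', hfreq⟩ := hB.frequently_exists.1 hfreq
  obtain ⟨-, hne, -⟩ := hfreq.exists
  refine ⟨c, hc.1, c', hc'.1, hne, c.isCompact_image.not_disjoint_of_forall_exists_dist_lt
    c'.isCompact_image.isClosed fun ε hε => ?_⟩
  have hsmall := tendsto_one_div_add_atTop_nhds_zero_nat.eventually (gt_mem_nhds hε)
  obtain ⟨n, ⟨-, z, hz, z', hz', hzz'⟩, hn⟩ := (hfreq.and_eventually hsmall).exists
  exact ⟨z, hz, z', hz', hzz'.trans hn⟩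

theorem exists_forall_mem_nearlyMeeting {F : XSpace K} {c c' : LoopClass} (hc : c ∈ F.1)
    (hc' : c' ∈ F.1) (hne : c ≠ c') (hcc' : ¬ Disjoint c.image c'.image) :
    ∃ m : ℕ, ∀ n : ℕ, F ∈ nearlyMeeting K (1 / (m + 1)) (1 / (n + 1)) := by
  obtain ⟨z, hz, hz'⟩ := not_disjoint_iff.1 hcc'
  obtain ⟨m, hm⟩ := exists_nat_one_div_lt
    (lt_min (LoopClass.diam_pos (F.2.2.1 c hc).1) (LoopClass.diam_pos (F.2.2.1 c' hc').1))
  refine ⟨m, fun n => ⟨c, hc, c', hc', hne, hm.trans_le (min_le_left _ _),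
    hm.trans_le (min_le_right _ _), z, hz, z, hz', ?_⟩⟩
  rw [dist_self]
  positivity

end Collections

/-- For every compact `K ⊂ ℂ`, the set of collections whose loops have
pairwise disjoint images is a Borel subset of `(X(K), d_X)`. -/
theorem disjointness_is_borel (K : Set ℂ) (hK : IsCompact K) :
    MeasurableSet {F : XSpace K |
      ∀ c ∈ F.1, ∀ c' ∈ F.1, c ≠ c' → Disjoint c.image c'.image} := by
  have hcompl : {F : XSpace K | ∀ c ∈ F.1, ∀ c' ∈ F.1, c ≠ c' → Disjoint c.image c'.image} =
      (⋃ m : ℕ, ⋂ n : ℕ, nearlyMeeting K (1 / (m + 1)) (1 / (n + 1)))ᶜ := by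
    ext F
    simp only [mem_compl_iff, mem_iUnion, mem_iInter]
    constructor
    · rintro hF ⟨m, hm⟩
      obtain ⟨c, hc, c', hc', hne, hcc'⟩ :=
        not_disjoint_of_forall_mem_nearlyMeeting (by positivity) hm
      exact hcc' (hF c hc c' hc' hne)
    · intro hF c hc c' hc' hne
      by_contra hcc'
      exact hF (exists_forall_mem_nearlyMeeting hc hc' hne hcc')
  rw [hcompl]
  exact (MeasurableSet.iUnion fun m => MeasurableSet.iInter fun n =>
    MeasurableSpace.measurableSet_generateFrom
      (isOpen_nearlyMeeting hK (by positivity) _)).compl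
end
end

section
/- Let 0 < α ≤ 1, let a < b be reals, let f : [a, b] → ℝ be α-Hölder continuous, and let S ⊆ [a, b] be a closed set whose α-dimensional Hausdorff measure is zero (in particular this holds if the Hausdorff dimension of S is strictly less than α). If f is constant on every connected component of [a, b] \ S, then f is constant on [a, b]. -/
/-!
The image under `f` of the closed set `S` is Lebesgue-null, since an `α`-Hölder map sends
`μH[α]`-null sets to `μH[1]`-null sets. The image of the open set `(a, b) \ S` is countable,
since `f` is constant on each of its components and every component contains a rational.
Hence `f '' [a, b]` is a Lebesgue-null interval, i.e. a single point.
-/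

open Set MeasureTheory
open scoped ENNReal NNReal

variable {X Y : Type*}

theorem HolderOnWith.of_dist_le' [PseudoMetricSpace X] [PseudoMetricSpace Y] {f : X → Y}
    {s : Set X} {C : ℝ} {r : ℝ≥0}
    (h : ∀ x ∈ s, ∀ y ∈ s, dist (f x) (f y) ≤ C * dist x y ^ (r : ℝ)) :
    HolderOnWith C.toNNReal r f s := by
  intro x hx y hy
  rw [edist_dist, edist_dist, ENNReal.ofReal_rpow_of_nonneg dist_nonneg r.coe_nonneg,
    ← ENNReal.ofReal_coe_nnreal, ← ENNReal.ofReal_mul (by positivity)]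
  refine ENNReal.ofReal_le_ofReal ((h x hx y hy).trans ?_)
  gcongr
  exact Real.le_coe_toNNReal C

theorem HolderOnWith.hausdorffMeasure_image_null [EMetricSpace X] [EMetricSpace Y]
    [MeasurableSpace X] [BorelSpace X] [MeasurableSpace Y] [BorelSpace Y]
    {f : X → Y} {s : Set X} {C r : ℝ≥0} (hf : HolderOnWith C r f s) (hr : 0 < r)
    (hs : μH[r] s = 0) : μH[1] (f '' s) = 0 := by
  have := hf.hausdorffMeasure_image_le hr zero_le_one
  rwa [mul_one, hs, mul_zero, nonpos_iff_eq_zero] at this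

theorem IsOpen.countable_image_of_eqOn_connectedComponentIn [TopologicalSpace X]
    [TopologicalSpace.SeparableSpace X] [LocallyConnectedSpace X] {U : Set X} (hU : IsOpen U)
    {f : X → Y} (hf : ∀ x ∈ U, ∀ y ∈ connectedComponentIn U x, f y = f x) :
    (f '' U).Countable := by
  obtain ⟨D, hDcount, hDdense⟩ := TopologicalSpace.exists_countable_dense X
  refine (hDcount.image f).mono ?_
  rintro _ ⟨x, hx, rfl⟩
  obtain ⟨d, hdD, hd_comp⟩ := hDdense.exists_mem_open hU.connectedComponentIn
    ⟨x, mem_connectedComponentIn hx⟩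
  exact ⟨d, hdD, hf x hx d hd_comp⟩

theorem Set.Icc_subset_union_Ioo_sdiff_union_pair [PartialOrder X] (a b : X) (S : Set X) :
    Icc a b ⊆ S ∪ (Ioo a b \ S) ∪ {a, b} := by
  intro x hx
  by_cases hxS : x ∈ S
  · exact .inl (.inl hxS)
  by_cases hxab : x ∈ ({a, b} : Set X)
  · exact .inr hxab
  exact .inl (.inr ⟨Icc_sdiff_both (a := a) (b := b) ▸ ⟨hx, hxab⟩, hxS⟩)

theorem IsPreconnected.subsingleton_of_volume_eq_zero {s : Set ℝ} (hs : IsPreconnected s)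
    (h : volume s = 0) : s.Subsingleton := by
  intro x hx y hy
  have hxy : volume (uIcc x y) = 0 := measure_mono_null (hs.ordConnected.uIcc_subset hx hy) h
  rw [Real.volume_interval, ENNReal.ofReal_eq_zero, abs_nonpos_iff, sub_eq_zero] at hxy
  exact hxy.symm

theorem holder_constant_off_thin_set_general (α : ℝ) (hα0 : 0 < α)
    (a b : ℝ) (f : ℝ → ℝ) (C : ℝ)
    (hf : ∀ x ∈ Set.Icc a b, ∀ y ∈ Set.Icc a b, |f x - f y| ≤ C * |x - y| ^ α)
    (S : Set ℝ) (hS : IsClosed S) (hSsub : S ⊆ Set.Icc a b)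
    (hSnull : μH[α] S = 0)
    (hconst : ∀ x ∈ Set.Icc a b \ S, ∀ y ∈ Set.Icc a b \ S,
      y ∈ connectedComponentIn (Set.Icc a b \ S) x → f x = f y) :
    ∀ x ∈ Set.Icc a b, ∀ y ∈ Set.Icc a b, f x = f y := by
  have hα : ((α.toNNReal : ℝ≥0) : ℝ) = α := Real.coe_toNNReal α hα0.le
  have hr : 0 < α.toNNReal := Real.toNNReal_pos.mpr hα0
  have hhold : HolderOnWith C.toNNReal α.toNNReal f (Icc a b) :=
    .of_dist_le' (by simpa only [Real.dist_eq, hα] using hf)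
  have hS_image : volume (f '' S) = 0 := by
    rw [← hausdorffMeasure_real]
    exact (hhold.mono hSsub).hausdorffMeasure_image_null hr (by rwa [hα])
  have hU_image : (f '' (Ioo a b \ S)).Countable := by
    refine (isOpen_Ioo.sdiff hS).countable_image_of_eqOn_connectedComponentIn fun x hx y hy => ?_
    have hxy := connectedComponentIn_mono x (sdiff_subset_sdiff_left Ioo_subset_Icc_self) hy
    exact (hconst x ⟨Ioo_subset_Icc_self hx.1, hx.2⟩ y
      (connectedComponentIn_subset _ _ hxy) hxy).symm
  have hIcc_image : volume (f '' Icc a b) = 0 := by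
    refine measure_mono_null (image_mono (Icc_subset_union_Ioo_sdiff_union_pair a b S)) ?_
    rw [image_union, image_union, measure_union_null_iff, measure_union_null_iff]
    exact ⟨⟨hS_image, hU_image.measure_zero _⟩, ((toFinite _).image f).measure_zero _⟩
  intro x hx y hy
  exact (isPreconnected_Icc.image f (hhold.continuousOn hr)).subsingleton_of_volume_eq_zero
    hIcc_image (mem_image_of_mem f hx) (mem_image_of_mem f hy)

/-- An `α`-Hölder continuous function on `[a, b]` that is constant on
every connected component of the complement of a closed set `S` of zero `α`-dimensional
Hausdorff measure is constant on `[a, b]`. -/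
theorem holder_constant_off_thin_set (α : ℝ) (hα0 : 0 < α) (hα1 : α ≤ 1)
    (a b : ℝ) (hab : a < b) (f : ℝ → ℝ) (C : ℝ)
    (hf : ∀ x ∈ Set.Icc a b, ∀ y ∈ Set.Icc a b, |f x - f y| ≤ C * |x - y| ^ α)
    (S : Set ℝ) (hS : IsClosed S) (hSsub : S ⊆ Set.Icc a b)
    (hSnull : μH[α] S = 0)
    (hconst : ∀ x ∈ Set.Icc a b \ S, ∀ y ∈ Set.Icc a b \ S,
      y ∈ connectedComponentIn (Set.Icc a b \ S) x → f x = f y) :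
    ∀ x ∈ Set.Icc a b, ∀ y ∈ Set.Icc a b, f x = f y :=
  holder_constant_off_thin_set_general α hα0 a b f C hf S hS hSsub hSnull hconst
end

section
/- Let T > 0, c > 0 and α ∈ (0, 1/2]. Let B : [0, T] → ℝ be α-Hölder with constant C, and let X : [0, T] → [0, ∞) be continuous, with s ↦ c/X_s Lebesgue integrable on [0, T] and X_t = B_t + ∫₀^t (c/X_s) ds for all t ∈ [0, T]. Then the function I : t ↦ ∫₀^t (c/X_s) ds is α-Hölder on [0, T], with a Hölder constant depending only on α, c, C and T; consequently X is also α-Hölder on [0, T]. -/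
/-!
Write `I t = ∫₀ᵗ c/X`, so that `X = B + I`. Fix `s < t` and the threshold `r = √(c (t - s))`,
and let `τ` be the last time in `[s, t]` at which `X ≤ r`. After `τ` the integrand is below
`c / r`, so `I t - I τ ≤ (t - s) c / r = r`. Up to `τ`, the drift
`I τ - I s = X τ - X s - (B τ - B s)` is at most `r + C (t - s)^α` because `X ≥ 0`. Hence
`0 ≤ I t - I s ≤ C (t - s)^α + 2 √(c (t - s))`, and `√(t - s) ≤ T^(1/2 - α) (t - s)^α` as `α ≤ 1/2`.
-/

open Set MeasureTheory Real intervalIntegral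
open scoped Interval

lemma rpow_le_rpow_sub_mul_rpow {h T β γ : ℝ} (h0 : 0 ≤ h) (hhT : h ≤ T) (hβγ : β ≤ γ)
    (hγ : 0 < γ) : h ^ γ ≤ T ^ (γ - β) * h ^ β := by
  rcases h0.eq_or_lt with rfl | hpos
  · rw [zero_rpow hγ.ne']
    exact mul_nonneg (rpow_nonneg hhT _) (rpow_nonneg le_rfl _)
  · calc h ^ γ = h ^ (γ - β) * h ^ β := by rw [← rpow_add hpos, sub_add_cancel]
      _ ≤ T ^ (γ - β) * h ^ β := by gcongr

lemma intervalIntegrable_of_integrableOn_Icc {f : ℝ → ℝ} {a b s t : ℝ}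
    (hf : IntegrableOn f (Icc a b)) (hs : s ∈ Icc a b) (ht : t ∈ Icc a b) :
    IntervalIntegrable f volume s t :=
  (hf.mono_set (uIcc_subset_Icc hs ht)).intervalIntegrable

lemma exists_last_le_of_continuousOn {X : ℝ → ℝ} {s t r : ℝ} (hst : s ≤ t)
    (hX : ContinuousOn X (Icc s t)) :
    ∃ τ ∈ Icc s t, (τ = s ∨ X τ ≤ r) ∧ ∀ u ∈ Ioc τ t, r < X u := by
  set S := Icc s t ∩ X ⁻¹' Iic r
  rcases S.eq_empty_or_nonempty with hS | hS
  · refine ⟨s, left_mem_Icc.2 hst, Or.inl rfl, fun u hu => not_le.1 fun hXu => ?_⟩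
    exact hS.subset ⟨Ioc_subset_Icc_self hu, hXu⟩
  · have hSc : IsCompact S :=
      isCompact_Icc.of_isClosed_subset
        (hX.preimage_isClosed_of_isClosed isClosed_Icc isClosed_Iic) inter_subset_left
    obtain ⟨τ, ⟨hτ, hXτ⟩, hgreat⟩ := hSc.exists_isGreatest hS
    refine ⟨τ, hτ, Or.inr hXτ, fun u hu => not_le.1 fun hXu => ?_⟩
    exact hu.1.not_ge (hgreat ⟨⟨hτ.1.trans hu.1.le, hu.2⟩, hXu⟩)

section Drift

variable {c H r s t : ℝ} {B X : ℝ → ℝ}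

lemma integral_div_le_of_lt {τ : ℝ} (hc : 0 ≤ c) (hr : 0 < r) (hτt : τ ≤ t)
    (hX : ∀ u ∈ Ioc τ t, r < X u) :
    ∫ u in τ..t, c / X u ≤ (t - τ) * (c / r) := by
  have hbound : ∀ u ∈ Ι τ t, ‖c / X u‖ ≤ c / r := by
    intro u hu
    rw [uIoc_of_le hτt] at hu
    have hXu := hX u hu
    rw [Real.norm_of_nonneg (div_nonneg hc (hr.trans hXu).le)]
    exact div_le_div_of_nonneg_left hc hr hXu.le
  calc ∫ u in τ..t, c / X u ≤ ‖∫ u in τ..t, c / X u‖ := Real.le_norm_self _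
    _ ≤ c / r * |t - τ| := norm_integral_le_of_norm_le_const hbound
    _ = (t - τ) * (c / r) := by rw [abs_of_nonneg (sub_nonneg.2 hτt), mul_comm]

lemma integral_div_le_of_threshold (hst : s ≤ t) (hX : ContinuousOn X (Icc s t))
    (hXs : 0 ≤ X s) (hint : IntegrableOn (fun u => c / X u) (Icc s t))
    (hB : ∀ u ∈ Icc s t, B s - B u ≤ H)
    (heq : ∀ u ∈ Icc s t, X u = X s + (B u - B s) + ∫ v in s..u, c / X v)
    (hc : 0 ≤ c) (hr : 0 < r) :
    ∫ u in s..t, c / X u ≤ H + r + (t - s) * (c / r) := by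
  have hs : s ∈ Icc s t := left_mem_Icc.2 hst
  have ht : t ∈ Icc s t := right_mem_Icc.2 hst
  obtain ⟨τ, hτ, hτr, hXτ⟩ := exists_last_le_of_continuousOn (r := r) hst hX
  have hbefore : ∫ u in s..τ, c / X u ≤ H + r := by
    rcases hτr with rfl | hXτr
    · simp only [integral_same]; linarith [hB τ hs]
    · linarith [heq τ hτ, hB τ hτ]
  have hafter : ∫ u in τ..t, c / X u ≤ (t - s) * (c / r) :=
    (integral_div_le_of_lt hc hr hτ.2 hXτ).trans <| by gcongr; exact hτ.1
  rw [← integral_add_adjacent_intervals (intervalIntegrable_of_integrableOn_Icc hint hs hτ)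
    (intervalIntegrable_of_integrableOn_Icc hint hτ ht)]
  linarith

lemma integral_div_le_sqrt (hst : s ≤ t) (hX : ContinuousOn X (Icc s t))
    (hXs : 0 ≤ X s) (hint : IntegrableOn (fun u => c / X u) (Icc s t))
    (hB : ∀ u ∈ Icc s t, B s - B u ≤ H)
    (heq : ∀ u ∈ Icc s t, X u = X s + (B u - B s) + ∫ v in s..u, c / X v) (hc : 0 < c) :
    ∫ u in s..t, c / X u ≤ H + 2 * √(c * (t - s)) := by
  rcases hst.eq_or_lt with rfl | hlt
  · simpa using hB s (left_mem_Icc.2 le_rfl)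
  · have hpos : 0 < c * (t - s) := mul_pos hc (sub_pos.2 hlt)
    set r := √(c * (t - s))
    have hr : 0 < r := sqrt_pos.2 hpos
    have hrr : (t - s) * (c / r) = r := by
      rw [mul_div_assoc', div_eq_iff hr.ne', mul_self_sqrt hpos.le]
      ring
    linarith [integral_div_le_of_threshold hst hX hXs hint hB heq hc.le hr]

end Drift

lemma abs_integral_div_sub_le {T c α C : ℝ} (hc : 0 < c) (hα0 : 0 ≤ α) (hα : α ≤ 1 / 2)
    (hC : 0 ≤ C) {B X : ℝ → ℝ}
    (hB : ∀ s ∈ Icc 0 T, ∀ t ∈ Icc 0 T, |B s - B t| ≤ C * |s - t| ^ α)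
    (hXc : ContinuousOn X (Icc 0 T)) (hX0 : ∀ t ∈ Icc 0 T, 0 ≤ X t)
    (hint : IntegrableOn (fun s => c / X s) (Icc 0 T))
    (hXeq : ∀ t ∈ Icc 0 T, X t = B t + ∫ s in 0..t, c / X s)
    {s t : ℝ} (hs : s ∈ Icc 0 T) (ht : t ∈ Icc 0 T) :
    |(∫ u in 0..s, c / X u) - ∫ u in 0..t, c / X u|
      ≤ (C + 2 * √c * T ^ (1 / 2 - α)) * |s - t| ^ α := by
  wlog hst : s ≤ t generalizing s t
  · rw [abs_sub_comm, abs_sub_comm s t]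
    exact this ht hs (le_of_not_ge hst)
  have hsub : Icc s t ⊆ Icc 0 T := Icc_subset_Icc hs.1 ht.2
  have h0 : (0 : ℝ) ∈ Icc 0 T := ⟨le_rfl, hs.1.trans hs.2⟩
  have hdiff : ∀ u ∈ Icc 0 T, (∫ v in 0..u, c / X v) - ∫ v in 0..s, c / X v
      = ∫ v in s..u, c / X v := fun u hu =>
    integral_interval_sub_left (intervalIntegrable_of_integrableOn_Icc hint h0 hu)
      (intervalIntegrable_of_integrableOn_Icc hint h0 hs)
  have heq : ∀ u ∈ Icc s t, X u = X s + (B u - B s) + ∫ v in s..u, c / X v := fun u hu => by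
    linarith [hdiff u (hsub hu), hXeq u (hsub hu), hXeq s hs]
  have hBs : ∀ u ∈ Icc s t, B s - B u ≤ C * (t - s) ^ α := fun u hu => by
    have hsu : |s - u| ≤ t - s := by
      rw [abs_sub_comm, abs_of_nonneg (sub_nonneg.2 hu.1)]; linarith [hu.2]
    calc B s - B u ≤ C * |s - u| ^ α := (le_abs_self _).trans (hB s hs u (hsub hu))
      _ ≤ C * (t - s) ^ α := by gcongr
  have hupper := integral_div_le_sqrt hst (hXc.mono hsub) (hX0 s hs) (hint.mono_set hsub) hBs
    heq hc
  have hlower : 0 ≤ ∫ u in s..t, c / X u :=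
    integral_nonneg hst fun u hu => div_nonneg hc.le (hX0 u (hsub hu))
  have hsqrt : √(c * (t - s)) ≤ √c * T ^ (1 / 2 - α) * (t - s) ^ α := by
    rw [sqrt_mul hc.le, sqrt_eq_rpow (t - s), mul_assoc]
    gcongr
    exact rpow_le_rpow_sub_mul_rpow (sub_nonneg.2 hst) (by linarith [hs.1, ht.2]) hα
      (by norm_num)
  rw [abs_sub_comm, hdiff t ht, abs_of_nonneg hlower, abs_sub_comm,
    abs_of_nonneg (sub_nonneg.2 hst)]
  linarith

/-- If `X_t = B_t + ∫₀^t c/X_s ds` with `B` `α`-Hölder with constant `C`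
(`α ≤ 1/2`), `X ≥ 0` continuous and `s ↦ c/X_s` integrable, then `t ↦ ∫₀^t c/X_s ds` is
`α`-Hölder on `[0, T]` with a constant depending only on `α, c, C, T`; consequently `X` is
also `α`-Hölder. -/
theorem integral_drift_is_holder (T c : ℝ) (hT : 0 < T) (hc : 0 < c)
    (α : ℝ) (hα0 : 0 < α) (hα : α ≤ 1 / 2) (C : ℝ) (hC : 0 ≤ C) :
    ∃ C' : ℝ, 0 ≤ C' ∧
      ∀ B X : ℝ → ℝ,
        (∀ s ∈ Set.Icc (0:ℝ) T, ∀ t ∈ Set.Icc (0:ℝ) T, |B s - B t| ≤ C * |s - t| ^ α) →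
        ContinuousOn X (Set.Icc 0 T) →
        (∀ t ∈ Set.Icc (0:ℝ) T, 0 ≤ X t) →
        MeasureTheory.IntegrableOn (fun s => c / X s) (Set.Icc 0 T) →
        (∀ t ∈ Set.Icc (0:ℝ) T, X t = B t + ∫ s in (0:ℝ)..t, c / X s) →
        (∀ s ∈ Set.Icc (0:ℝ) T, ∀ t ∈ Set.Icc (0:ℝ) T,
          |(∫ u in (0:ℝ)..s, c / X u) - ∫ u in (0:ℝ)..t, c / X u|
            ≤ C' * |s - t| ^ α) ∧
        (∀ s ∈ Set.Icc (0:ℝ) T, ∀ t ∈ Set.Icc (0:ℝ) T,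
          |X s - X t| ≤ (C + C') * |s - t| ^ α) := by
  refine ⟨C + 2 * √c * T ^ (1 / 2 - α),
    add_nonneg hC (mul_nonneg (by positivity) (rpow_nonneg hT.le _)),
    fun B X hB hXc hX0 hint hXeq => ?_⟩
  have hI : ∀ s ∈ Icc 0 T, ∀ t ∈ Icc 0 T, _ := fun s hs t ht =>
    abs_integral_div_sub_le hc hα0.le hα hC hB hXc hX0 hint hXeq hs ht
  refine ⟨hI, fun s hs t ht => ?_⟩
  calc |X s - X t|
      = |(B s - B t) + ((∫ u in (0:ℝ)..s, c / X u) - ∫ u in (0:ℝ)..t, c / X u)| := by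
        rw [hXeq s hs, hXeq t ht]; congr 1; ring
    _ ≤ C * |s - t| ^ α + (C + 2 * √c * T ^ (1 / 2 - α)) * |s - t| ^ α :=
        (abs_add_le _ _).trans (add_le_add (hB s hs t ht) (hI s hs t ht))
    _ = (C + (C + 2 * √c * T ^ (1 / 2 - α))) * |s - t| ^ α := by ring
end

section
/- Let T > 0 and let X, Y : [0, T] → [0, ∞) be continuous functions whose zero sets {t : X_t = 0} and {t : Y_t = 0} have Lebesgue measure zero. Suppose there exists an order-preserving bijection Φ from the set of connected components of {t ∈ [0, T] : X_t > 0} to the set of connected components of {t ∈ [0, T] : Y_t > 0} (order-preserving: if a component lies entirely to the left of another, then its image lies entirely to the left of the other's image) such that every component I, with left endpoint a and length L, is mapped to a component Φ(I) with some left endpoint a′ and the same length L, satisfying Y(a′ + s) = X(a + s) for all s ∈ [0, L]. Then X = Y on [0, T]. -/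
/-!
Because the zero set of `X` is null, the left endpoint `a` of an excursion interval `I` equals
the measure of `{X > 0} ∩ [0, a)`, i.e. the total length of the excursion intervals to the left
of `I`. These are countably many: by continuity every excursion interval other than `{0}` or `{T}`
has interior and so contains a rational. `Φ` maps them bijectively and length-preservingly onto
the excursion intervals to the left of `Φ I`, so `I` and `Φ I` have the same left endpoint; hence
`X` and `Y` agree on every excursion interval of either function, and both vanish elsewhere.
-/

noncomputable section

open Set Filter Metric MeasureTheory
open scoped Classical

/-- The excursion intervals of `X` away from `0` on `[0, T]`: the connected components of
`{t ∈ [0, T] : X t > 0}`. -/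
def excursionComponents (T : ℝ) (X : ℝ → ℝ) : Set (Set ℝ) :=
  {I | ∃ t ∈ Set.Icc (0:ℝ) T, 0 < X t ∧
    I = connectedComponentIn {s ∈ Set.Icc (0:ℝ) T | 0 < X s} t}

theorem Set.OrdConnected.lt_or_gt_of_disjoint {α : Type*} [LinearOrder α] {I J : Set α}
    (hI : I.OrdConnected) (hJ : J.OrdConnected) (hIJ : Disjoint I J) :
    (∀ s ∈ I, ∀ t ∈ J, s < t) ∨ (∀ s ∈ J, ∀ t ∈ I, s < t) := by
  by_contra! h
  obtain ⟨⟨s, hs, t, ht, hts⟩, ⟨u, hu, v, hv, hvu⟩⟩ := h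
  rcases le_total t v with htv | hvt
  · exact disjoint_left.mp hIJ hv (hJ.out ht hu ⟨htv, hvu⟩)
  · exact disjoint_left.mp hIJ (hI.out hv hs ⟨hvt, hts⟩) ht

section Components

variable {α : Type*} [TopologicalSpace α] {S : Set α}

theorem pairwiseDisjoint_connectedComponentIn_image (S : Set α) :
    (connectedComponentIn S '' S).PairwiseDisjoint id := by
  rintro _ ⟨x, -, rfl⟩ _ ⟨y, -, rfl⟩ hne
  refine disjoint_left.mpr fun z hzx hzy => hne ?_
  exact (connectedComponentIn_eq hzx).trans (connectedComponentIn_eq hzy).symm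

theorem nonempty_of_mem_connectedComponentIn_image {I : Set α}
    (hI : I ∈ connectedComponentIn S '' S) : I.Nonempty := by
  obtain ⟨x, hx, rfl⟩ := hI
  exact ⟨x, mem_connectedComponentIn hx⟩

theorem subset_of_mem_connectedComponentIn_image {I : Set α}
    (hI : I ∈ connectedComponentIn S '' S) : I ⊆ S := by
  obtain ⟨x, -, rfl⟩ := hI
  exact connectedComponentIn_subset S x

theorem isPreconnected_of_mem_connectedComponentIn_image {I : Set α}
    (hI : I ∈ connectedComponentIn S '' S) : IsPreconnected I := by
  obtain ⟨x, -, rfl⟩ := hI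
  exact isPreconnected_connectedComponentIn

end Components

section RealComponents

variable {S : Set ℝ}

theorem lt_or_gt_of_mem_connectedComponentIn_image {I J : Set ℝ}
    (hI : I ∈ connectedComponentIn S '' S) (hJ : J ∈ connectedComponentIn S '' S)
    (hIJ : I ≠ J) :
    (∀ s ∈ I, ∀ t ∈ J, s < t) ∨ (∀ s ∈ J, ∀ t ∈ I, s < t) :=
  (isPreconnected_of_mem_connectedComponentIn_image hI).ordConnected.lt_or_gt_of_disjoint
    (isPreconnected_of_mem_connectedComponentIn_image hJ).ordConnected
    (pairwiseDisjoint_connectedComponentIn_image S hI hJ hIJ)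

theorem isBounded_of_mem_connectedComponentIn_image (hS : Bornology.IsBounded S) {I : Set ℝ}
    (hI : I ∈ connectedComponentIn S '' S) : Bornology.IsBounded I :=
  hS.subset (subset_of_mem_connectedComponentIn_image hI)

theorem measurableSet_of_mem_connectedComponentIn_image {I : Set ℝ}
    (hI : I ∈ connectedComponentIn S '' S) : MeasurableSet I :=
  (isPreconnected_of_mem_connectedComponentIn_image hI).ordConnected.measurableSet

/-- Every component through an interior point contains a rational, so only the components through
the points of `S \ interior S` can fail to be indexed by `ℚ`. -/
theorem countable_connectedComponentIn_image (h : (S \ interior S).Countable) :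
    (connectedComponentIn S '' S).Countable := by
  have hint : connectedComponentIn S '' interior S ⊆
      range (fun q : ℚ => connectedComponentIn S q) := by
    rintro _ ⟨t, ht, rfl⟩
    obtain ⟨l, u, htlu, hsub⟩ :=
      mem_nhds_iff_exists_Ioo_subset.mp (mem_interior_iff_mem_nhds.mp ht)
    obtain ⟨q, hlq, hqu⟩ := exists_rat_btwn (htlu.1.trans htlu.2)
    have hq : (q : ℝ) ∈ connectedComponentIn S t :=
      isPreconnected_Ioo.subset_connectedComponentIn htlu hsub ⟨hlq, hqu⟩
    exact ⟨q, (connectedComponentIn_eq hq).symm⟩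
  have hsplit : connectedComponentIn S '' S ⊆
      connectedComponentIn S '' interior S ∪ connectedComponentIn S '' (S \ interior S) := by
    rw [← image_union, union_sdiff_cancel interior_subset]
  exact (((countable_range _).mono hint).union (h.image _)).mono hsplit

theorem IsPreconnected.volume_eq {s : Set ℝ} (hs : IsPreconnected s) (hne : s.Nonempty)
    (hb : Bornology.IsBounded s) : volume s = ENNReal.ofReal (sSup s - sInf s) := by
  refine le_antisymm ?_ ?_
  · exact (measure_mono (subset_Icc_csInf_csSup hb.bddBelow hb.bddAbove)).trans_eq
      Real.volume_Icc
  · exact Real.volume_Ioo.symm.trans_le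
      (measure_mono (IsConnected.Ioo_csInf_csSup_subset ⟨hne, hs⟩ hb.bddBelow hb.bddAbove))

theorem volume_eq_of_mem_connectedComponentIn_image (hS : Bornology.IsBounded S) {I : Set ℝ}
    (hI : I ∈ connectedComponentIn S '' S) : volume I = ENNReal.ofReal (sSup I - sInf I) :=
  (isPreconnected_of_mem_connectedComponentIn_image hI).volume_eq
    (nonempty_of_mem_connectedComponentIn_image hI)
    (isBounded_of_mem_connectedComponentIn_image hS hI)

def componentsLeftOf (S I : Set ℝ) : Set (Set ℝ) :=
  {J ∈ connectedComponentIn S '' S | ∀ s ∈ J, ∀ t ∈ I, s < t}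

theorem volume_sUnion_componentsLeftOf {I : Set ℝ} (hI : I ∈ connectedComponentIn S '' S)
    (hb : BddBelow I) : volume (⋃₀ componentsLeftOf S I) = volume (S ∩ Iio (sInf I)) := by
  have hne := nonempty_of_mem_connectedComponentIn_image hI
  have hleft : S ∩ Iio (sInf I) ⊆ ⋃₀ componentsLeftOf S I := by
    rintro s ⟨hs, hsI⟩
    have hJ : connectedComponentIn S s ∈ connectedComponentIn S '' S := mem_image_of_mem _ hs
    have hs' := mem_connectedComponentIn hs
    have hJI : connectedComponentIn S s ≠ I := by
      rintro h
      exact (csInf_le hb (h ▸ hs')).not_gt hsI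
    refine ⟨_, ⟨hJ, ?_⟩, hs'⟩
    refine (lt_or_gt_of_mem_connectedComponentIn_image hJ hI hJI).resolve_right fun h => ?_
    obtain ⟨x, hx⟩ := hne
    exact (h x hx s hs').not_gt (hsI.trans_le (csInf_le hb hx))
  have hright : ⋃₀ componentsLeftOf S I ⊆ S ∩ Iic (sInf I) := by
    rintro s ⟨J, ⟨hJ, hJI⟩, hs⟩
    exact ⟨subset_of_mem_connectedComponentIn_image hJ hs,
      le_csInf hne fun t ht => (hJI s hs t ht).le⟩
  refine le_antisymm ?_ (measure_mono hleft)
  calc volume (⋃₀ componentsLeftOf S I) ≤ volume (S ∩ Iic (sInf I)) := measure_mono hright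
    _ = volume (S ∩ Iio (sInf I)) := measure_congr ((ae_eq_refl S).inter Iio_ae_eq_Iic).symm

end RealComponents

theorem MeasureTheory.measure_biUnion_eq_measure_sUnion {α : Type*} [MeasurableSpace α]
    {μ : Measure α} {L : Set (Set α)} {Φ : Set α → Set α} (hL : L.Countable)
    (hd : L.PairwiseDisjoint id) (hdΦ : L.PairwiseDisjoint Φ) (hm : ∀ J ∈ L, MeasurableSet J)
    (hmΦ : ∀ J ∈ L, MeasurableSet (Φ J)) (h : ∀ J ∈ L, μ (Φ J) = μ J) :
    μ (⋃ J ∈ L, Φ J) = μ (⋃₀ L) := by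
  rw [measure_biUnion hL hdΦ hmΦ, measure_sUnion hL hd hm]
  exact tsum_congr fun J => h J J.2

section OrderedComponents

variable {S S' : Set ℝ} {Φ : Set ℝ → Set ℝ}

theorem image_componentsLeftOf
    (hbij : BijOn Φ (connectedComponentIn S '' S) (connectedComponentIn S' '' S'))
    (horder : ∀ I ∈ connectedComponentIn S '' S, ∀ J ∈ connectedComponentIn S '' S,
      (∀ s ∈ I, ∀ t ∈ J, s < t) → ∀ s ∈ Φ I, ∀ t ∈ Φ J, s < t)
    {I : Set ℝ} (hI : I ∈ connectedComponentIn S '' S) :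
    Φ '' componentsLeftOf S I = componentsLeftOf S' (Φ I) := by
  refine Subset.antisymm ?_ ?_
  · rintro _ ⟨J, ⟨hJ, hJI⟩, rfl⟩
    exact ⟨hbij.mapsTo hJ, horder J hJ I hI hJI⟩
  · rintro K ⟨hK, hKI⟩
    obtain ⟨J, hJ, rfl⟩ := hbij.surjOn hK
    obtain ⟨k, hk⟩ := nonempty_of_mem_connectedComponentIn_image hK
    have hJI : J ≠ I := by
      rintro rfl
      exact lt_irrefl k (hKI k hk k hk)
    refine ⟨J, ⟨hJ, ?_⟩, rfl⟩
    refine (lt_or_gt_of_mem_connectedComponentIn_image hJ hI hJI).resolve_right fun h => ?_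
    obtain ⟨p, hp⟩ := nonempty_of_mem_connectedComponentIn_image (hbij.mapsTo hI)
    exact lt_asymm (hKI k hk p hp) (horder I hI J hJ h p hp k hk)

variable {T : ℝ}

theorem volume_inter_Iio_of_ae_eq_Icc (hS : S =ᵐ[volume] Icc 0 T) {a : ℝ}
    (haT : a ≤ T) : volume (S ∩ Iio a) = ENNReal.ofReal a := by
  have hIco : Icc 0 T ∩ Iio a = Ico 0 a := by
    ext t
    simp only [mem_inter_iff, mem_Icc, mem_Iio, mem_Ico]
    constructor
    · rintro ⟨⟨h0, -⟩, hta⟩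
      exact ⟨h0, hta⟩
    · rintro ⟨h0, hta⟩
      exact ⟨⟨h0, hta.le.trans haT⟩, hta⟩
  rw [measure_congr (hS.inter (ae_eq_refl (Iio a))), hIco, Real.volume_Ico, sub_zero]

theorem sInf_mem_Icc_of_mem_connectedComponentIn_image (hST : S ⊆ Icc 0 T) {I : Set ℝ}
    (hI : I ∈ connectedComponentIn S '' S) : sInf I ∈ Icc 0 T := by
  have hIT := (subset_of_mem_connectedComponentIn_image hI).trans hST
  obtain ⟨x, hx⟩ := nonempty_of_mem_connectedComponentIn_image hI
  exact ⟨le_csInf ⟨x, hx⟩ fun y hy => (hIT hy).1,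
    (csInf_le (bddBelow_Icc.mono hIT) hx).trans (hIT hx).2⟩

theorem volume_sUnion_componentsLeftOf_eq_sInf (hS : S =ᵐ[volume] Icc 0 T) (hST : S ⊆ Icc 0 T)
    {I : Set ℝ} (hI : I ∈ connectedComponentIn S '' S) :
    volume (⋃₀ componentsLeftOf S I) = ENNReal.ofReal (sInf I) := by
  have hIT := (subset_of_mem_connectedComponentIn_image hI).trans hST
  have ha := sInf_mem_Icc_of_mem_connectedComponentIn_image hST hI
  rw [volume_sUnion_componentsLeftOf hI (bddBelow_Icc.mono hIT),
    volume_inter_Iio_of_ae_eq_Icc hS ha.2]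

theorem sInf_apply_eq_sInf_of_bijOn (hS : S =ᵐ[volume] Icc 0 T) (hST : S ⊆ Icc 0 T)
    (hS' : S' =ᵐ[volume] Icc 0 T) (hS'T : S' ⊆ Icc 0 T)
    (hcount : (connectedComponentIn S '' S).Countable)
    (hbij : BijOn Φ (connectedComponentIn S '' S) (connectedComponentIn S' '' S'))
    (horder : ∀ I ∈ connectedComponentIn S '' S, ∀ J ∈ connectedComponentIn S '' S,
      (∀ s ∈ I, ∀ t ∈ J, s < t) → ∀ s ∈ Φ I, ∀ t ∈ Φ J, s < t)
    (hvol : ∀ J ∈ connectedComponentIn S '' S, volume (Φ J) = volume J)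
    {I : Set ℝ} (hI : I ∈ connectedComponentIn S '' S) : sInf (Φ I) = sInf I := by
  have hL : componentsLeftOf S I ⊆ connectedComponentIn S '' S := sep_subset _ _
  have hdΦ : (componentsLeftOf S I).PairwiseDisjoint Φ :=
    (hbij.injOn.mono hL).pairwiseDisjoint_image.mp
      ((pairwiseDisjoint_connectedComponentIn_image S').subset
        (hbij.mapsTo.mono_left hL).image_subset)
  have hvol_left :
      volume (⋃₀ componentsLeftOf S' (Φ I)) = volume (⋃₀ componentsLeftOf S I) := by
    rw [← image_componentsLeftOf hbij horder hI, sUnion_image]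
    exact measure_biUnion_eq_measure_sUnion (hcount.mono hL)
      ((pairwiseDisjoint_connectedComponentIn_image S).subset hL) hdΦ
      (fun J hJ => measurableSet_of_mem_connectedComponentIn_image (hL hJ))
      (fun J hJ => measurableSet_of_mem_connectedComponentIn_image (hbij.mapsTo (hL hJ)))
      (fun J hJ => hvol J (hL hJ))
  rwa [volume_sUnion_componentsLeftOf_eq_sInf hS' hS'T (hbij.mapsTo hI),
    volume_sUnion_componentsLeftOf_eq_sInf hS hST hI, ENNReal.ofReal_eq_ofReal_iff
      (sInf_mem_Icc_of_mem_connectedComponentIn_image hS'T (hbij.mapsTo hI)).1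
      (sInf_mem_Icc_of_mem_connectedComponentIn_image hST hI).1] at hvol_left

end OrderedComponents

theorem eqOn_union_of_shift {X Y : ℝ → ℝ} {I K : Set ℝ} (hI : Bornology.IsBounded I)
    (hK : Bornology.IsBounded K) (hinf : sInf K = sInf I)
    (hlen : sSup K - sInf K = sSup I - sInf I)
    (hshift : ∀ s ∈ Icc 0 (sSup I - sInf I), Y (sInf K + s) = X (sInf I + s)) :
    EqOn X Y (I ∪ K) := by
  have hsup : sSup K = sSup I := by linarith
  have hIcc : EqOn X Y (Icc (sInf I) (sSup I)) := by
    intro t ht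
    have h := hshift (t - sInf I) ⟨by linarith [ht.1], by linarith [ht.2]⟩
    rw [hinf, add_sub_cancel] at h
    exact h.symm
  refine hIcc.mono (union_subset (subset_Icc_csInf_csSup hI.bddBelow hI.bddAbove) ?_)
  rw [← hinf, ← hsup]
  exact subset_Icc_csInf_csSup hK.bddBelow hK.bddAbove

section Excursions

variable {T : ℝ} {X : ℝ → ℝ}

theorem excursionComponents_eq (T : ℝ) (X : ℝ → ℝ) :
    excursionComponents T X =
      connectedComponentIn {s ∈ Icc 0 T | 0 < X s} '' {s ∈ Icc 0 T | 0 < X s} := by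
  ext I
  constructor
  · rintro ⟨t, ht, hXt, rfl⟩
    exact ⟨t, ⟨ht, hXt⟩, rfl⟩
  · rintro ⟨t, ⟨ht, hXt⟩, rfl⟩
    exact ⟨t, ht, hXt, rfl⟩

theorem sep_pos_ae_eq_Icc (hXpos : ∀ t ∈ Icc 0 T, 0 ≤ X t)
    (hXzero : volume {t ∈ Icc 0 T | X t = 0} = 0) :
    {s ∈ Icc 0 T | 0 < X s} =ᵐ[volume] Icc 0 T := by
  refine ae_eq_set.mpr ⟨by rw [sdiff_eq_empty.mpr (sep_subset _ _), measure_empty],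
    measure_mono_null ?_ hXzero⟩
  rintro t ⟨ht, htX⟩
  exact ⟨ht, le_antisymm (not_lt.mp fun h => htX ⟨ht, h⟩) (hXpos t ht)⟩

theorem diff_interior_subset_of_continuousOn (hX : ContinuousOn X (Icc 0 T)) :
    {s ∈ Icc 0 T | 0 < X s} \ interior {s ∈ Icc 0 T | 0 < X s} ⊆ {0, T} := by
  rintro t ⟨⟨ht, hXt⟩, hint⟩
  by_contra h
  simp only [mem_insert_iff, mem_singleton_iff, not_or] at h
  have hopen : IsOpen (Ioo 0 T ∩ X ⁻¹' Ioi 0) :=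
    (hX.mono Ioo_subset_Icc_self).isOpen_inter_preimage isOpen_Ioo isOpen_Ioi
  have hsub : Ioo 0 T ∩ X ⁻¹' Ioi 0 ⊆ {s ∈ Icc 0 T | 0 < X s} :=
    fun s hs => ⟨Ioo_subset_Icc_self hs.1, hs.2⟩
  exact hint (interior_maximal hsub hopen
    ⟨⟨lt_of_le_of_ne ht.1 (Ne.symm h.1), lt_of_le_of_ne ht.2 h.2⟩, hXt⟩)

theorem countable_connectedComponentIn_image_of_continuousOn (hX : ContinuousOn X (Icc 0 T)) :
    (connectedComponentIn {s ∈ Icc 0 T | 0 < X s} '' {s ∈ Icc 0 T | 0 < X s}).Countable :=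
  countable_connectedComponentIn_image
    (((finite_singleton T).insert 0).countable.mono (diff_interior_subset_of_continuousOn hX))

end Excursions

theorem excursions_determine_function_general (T : ℝ) (X Y : ℝ → ℝ)
    (hX : ContinuousOn X (Set.Icc 0 T))
    (hXpos : ∀ t ∈ Set.Icc (0:ℝ) T, 0 ≤ X t) (hYpos : ∀ t ∈ Set.Icc (0:ℝ) T, 0 ≤ Y t)
    (hXzero : MeasureTheory.volume {t ∈ Set.Icc (0:ℝ) T | X t = 0} = 0)
    (hYzero : MeasureTheory.volume {t ∈ Set.Icc (0:ℝ) T | Y t = 0} = 0)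
    (Φ : Set ℝ → Set ℝ)
    (hbij : Set.BijOn Φ (excursionComponents T X) (excursionComponents T Y))
    (horder : ∀ I ∈ excursionComponents T X, ∀ J ∈ excursionComponents T X,
      (∀ s ∈ I, ∀ t ∈ J, s < t) → ∀ s ∈ Φ I, ∀ t ∈ Φ J, s < t)
    (hmatch : ∀ I ∈ excursionComponents T X,
      sSup (Φ I) - sInf (Φ I) = sSup I - sInf I ∧
      ∀ s ∈ Set.Icc (0:ℝ) (sSup I - sInf I), Y (sInf (Φ I) + s) = X (sInf I + s)) :
    ∀ t ∈ Set.Icc (0:ℝ) T, X t = Y t := by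
  simp only [excursionComponents_eq] at hbij horder hmatch
  set P := {s ∈ Icc 0 T | 0 < X s}
  set Q := {s ∈ Icc 0 T | 0 < Y s}
  have hP : Bornology.IsBounded P := (Metric.isBounded_Icc 0 T).subset (sep_subset _ _)
  have hQ : Bornology.IsBounded Q := (Metric.isBounded_Icc 0 T).subset (sep_subset _ _)
  have hvol : ∀ J ∈ connectedComponentIn P '' P, volume (Φ J) = volume J := fun J hJ => by
    rw [volume_eq_of_mem_connectedComponentIn_image hQ (hbij.mapsTo hJ),
      volume_eq_of_mem_connectedComponentIn_image hP hJ, (hmatch J hJ).1]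
  have hagree : ∀ I ∈ connectedComponentIn P '' P, EqOn X Y (I ∪ Φ I) := fun I hI =>
    eqOn_union_of_shift (isBounded_of_mem_connectedComponentIn_image hP hI)
      (isBounded_of_mem_connectedComponentIn_image hQ (hbij.mapsTo hI))
      (sInf_apply_eq_sInf_of_bijOn (sep_pos_ae_eq_Icc hXpos hXzero) (sep_subset _ _)
        (sep_pos_ae_eq_Icc hYpos hYzero) (sep_subset _ _)
        (countable_connectedComponentIn_image_of_continuousOn hX) hbij horder hvol hI)
      (hmatch I hI).1 (hmatch I hI).2
  intro t ht
  by_cases hXt : 0 < X t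
  · exact hagree _ (mem_image_of_mem _ ⟨ht, hXt⟩)
      (Or.inl (mem_connectedComponentIn ⟨ht, hXt⟩))
  by_cases hYt : 0 < Y t
  · obtain ⟨I, hI, hIt⟩ := hbij.surjOn (mem_image_of_mem _ ⟨ht, hYt⟩)
    exact hagree I hI (Or.inr (hIt ▸ mem_connectedComponentIn ⟨ht, hYt⟩))
  · linarith [hXpos t ht, hYpos t ht]

/-- A nonnegative continuous function on `[0, T]` whose zero set has
Lebesgue measure zero is determined by the ordered collection of its excursions away
from `0`. -/
theorem excursions_determine_function (T : ℝ) (hT : 0 < T) (X Y : ℝ → ℝ)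
    (hX : ContinuousOn X (Set.Icc 0 T)) (hY : ContinuousOn Y (Set.Icc 0 T))
    (hXpos : ∀ t ∈ Set.Icc (0:ℝ) T, 0 ≤ X t) (hYpos : ∀ t ∈ Set.Icc (0:ℝ) T, 0 ≤ Y t)
    (hXzero : MeasureTheory.volume {t ∈ Set.Icc (0:ℝ) T | X t = 0} = 0)
    (hYzero : MeasureTheory.volume {t ∈ Set.Icc (0:ℝ) T | Y t = 0} = 0)
    (Φ : Set ℝ → Set ℝ)
    (hbij : Set.BijOn Φ (excursionComponents T X) (excursionComponents T Y))
    (horder : ∀ I ∈ excursionComponents T X, ∀ J ∈ excursionComponents T X,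
      (∀ s ∈ I, ∀ t ∈ J, s < t) → ∀ s ∈ Φ I, ∀ t ∈ Φ J, s < t)
    (hmatch : ∀ I ∈ excursionComponents T X,
      sSup (Φ I) - sInf (Φ I) = sSup I - sInf I ∧
      ∀ s ∈ Set.Icc (0:ℝ) (sSup I - sInf I), Y (sInf (Φ I) + s) = X (sInf I + s)) :
    ∀ t ∈ Set.Icc (0:ℝ) T, X t = Y t :=
  excursions_determine_function_general T X Y hX hXpos hYpos hXzero hYzero Φ hbij horder hmatch
end
end
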